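/- For every natural number n and complex number a with (2a-3)_k ≠ 0 for 0 ≤ k ≤ 2n and a-1 ≠ 0, ∑_{k=0}^{2n} (-2n)_k (a)_k 2^k / ((2a-3)_k k!) = ((1/2)_n / (a-3/2)_n) · (1 + 4n/(a-1)). -/

import Mathlib

/-!
Both sides, as functions of `n`, satisfy the second-order recurrence
`(2n+1)(n+1) u(n) - (4n² + 2n + 4an + 5a + 1) u(n+1) + (a+n)(2a+2n-1) u(n+2) = 0`
found by Zeilberger's algorithm, and they agree at `n = 0, 1`. For the closed form the recurrence
is a rational-function identity. For the sum it follows by summing a telescoping identity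
between the terms `t_x(k)` of `₂F₁(-2x, a; 2a-3; 2)` for `x = n, n+1, n+2` over `k < 2n + 4`: the
terms with `x = n, n+1` vanish beyond `k = 2n`, `2n+2`, and the value of the certificate at
`k = 2n + 4` is exactly the missing top term of the sum for `n + 2`.
-/

open Finset

noncomputable def poch (x : ℂ) (k : ℕ) : ℂ := (ascPochhammer ℂ k).eval x

lemma poch_zero (x : ℂ) : poch x 0 = 1 := by simp [poch]

lemma poch_succ (x : ℂ) (k : ℕ) : poch x (k + 1) = poch x k * (x + k) :=
  ascPochhammer_succ_eval k x

lemma poch_succ_left (x : ℂ) (k : ℕ) : poch x (k + 1) = x * poch (x + 1) k := by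
  simp [poch, ascPochhammer_succ_left, Polynomial.eval_comp]

lemma poch_neg_natCast_of_lt {m k : ℕ} (h : m < k) : poch (-(m : ℂ)) k = 0 :=
  ascPochhammer_eval_neg_coe_nat_of_lt h

lemma poch_mul_add_mul_add_one (y : ℂ) (k : ℕ) :
    poch y k * (y + k) * (y + k + 1) = y * (y + 1) * poch (y + 2) k := by
  have h := poch_succ y (k + 1)
  rw [poch_succ y k, poch_succ_left, poch_succ_left, add_assoc, one_add_one_eq_two] at h
  push_cast at h
  linear_combination -h

/-- `t_x(k)`, the `k`-th term of `₂F₁(-2x, a; 2a-3; 2)`, with `x` complex so that it can be shifted. -/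
noncomputable def summand (a x : ℂ) (k : ℕ) : ℂ :=
  poch (-(2 * x)) k * poch a k * 2 ^ k / (poch (2 * a - 3) k * k.factorial)

lemma summand_succ_mul (a x : ℂ) (k : ℕ) (hk : 2 * a - 3 + k ≠ 0) :
    summand a x (k + 1) * ((2 * a - 3 + k) * (k + 1))
      = summand a x k * (2 * (k - 2 * x) * (a + k)) := by
  have hk₁ : (k : ℂ) + 1 ≠ 0 := by exact_mod_cast k.succ_ne_zero
  simp only [summand, poch_succ, Nat.factorial_succ, pow_succ]
  push_cast
  field_simp
  ring

lemma summand_mul_add_one (a x : ℂ) (k : ℕ) :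
    summand a x k * ((2 * x + 2) * (2 * x + 1))
      = summand a (x + 1) k * ((k - 2 * x - 2) * (k - 2 * x - 1)) := by
  have h := poch_mul_add_mul_add_one (-(2 * (x + 1))) k
  rw [show -(2 * (x + 1)) + 2 = -(2 * x) by ring] at h
  simp only [summand, div_mul_eq_mul_div]
  congr 1
  linear_combination -(poch a k * 2 ^ k) * h

lemma summand_eq_zero_of_lt (a : ℂ) {n k : ℕ} (h : 2 * n < k) : summand a n k = 0 := by
  have h₀ := poch_neg_natCast_of_lt (m := 2 * n) h
  push_cast at h₀
  simp [summand, h₀]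

/-- Zeilberger's certificate: `k (k + 2a - 4) q(k) t_{x+2}(k)` with `q` the quadratic factor. -/
noncomputable def certificate (a x : ℂ) (k : ℕ) : ℂ :=
  k * (k + 2 * a - 4) * (k ^ 2 - (4 * x + 10) * k + 27 - 6 * a + 16 * x - 4 * a * x) *
    summand a (x + 2) k

lemma certificate_zero (a x : ℂ) : certificate a x 0 = 0 := by simp [certificate]

-- Everything is a polynomial multiple of `t_{x+2}(k)` once the three contiguity relations are used.
lemma summand_telescoping (a x : ℂ) (k : ℕ) (hk : 2 * a - 3 + k ≠ 0) :
    2 * (2 * x + 3) * (2 * x + 4) *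
        ((2 * x + 1) * (x + 1) * summand a x k
          + -(4 * x ^ 2 + 2 * x + 4 * a * x + 5 * a + 1) * summand a (x + 1) k
          + (a + x) * (2 * a + 2 * x - 1) * summand a (x + 2) k)
      = certificate a x (k + 1) - certificate a x k := by
  have h₀ := summand_mul_add_one a x k
  have h₁ := summand_mul_add_one a (x + 1) k
  have h₂ := summand_succ_mul a (x + 2) k hk
  rw [add_assoc x 1 1, one_add_one_eq_two] at h₁
  simp only [certificate]
  push_cast
  linear_combination (2 * x + 3) * (2 * x + 4) * h₀
    + (-2 * (4 * x ^ 2 + 2 * x + 4 * a * x + 5 * a + 1) + (k - 2 * x - 2) * (k - 2 * x - 1)) * h₁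
    - ((k + 1) ^ 2 - (4 * x + 10) * (k + 1) + 27 - 6 * a + 16 * x - 4 * a * x) * h₂

noncomputable def hypSum (a : ℂ) (n : ℕ) : ℂ := ∑ k ∈ range (2 * n + 1), summand a n k

lemma sum_range_summand_of_le (a : ℂ) {n N : ℕ} (h : 2 * n + 1 ≤ N) :
    ∑ k ∈ range N, summand a n k = hypSum a n :=
  (sum_subset (range_subset_range.mpr h) fun _ hN hn ↦
    summand_eq_zero_of_lt a (by simp only [mem_range] at hN hn; omega)).symm

theorem hypSum_recurrence (a : ℂ) (m : ℕ) (hc : ∀ k < 2 * m + 4, 2 * a - 3 + k ≠ 0) :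
    (2 * m + 1) * (m + 1) * hypSum a m
      + -(4 * m ^ 2 + 2 * m + 4 * a * m + 5 * a + 1) * hypSum a (m + 1)
      + (a + m) * (2 * a + 2 * m - 1) * hypSum a (m + 2) = 0 := by
  have hK : 2 * (2 * (m : ℂ) + 3) * (2 * m + 4) ≠ 0 := by
    exact_mod_cast (by positivity : 2 * (2 * m + 3) * (2 * m + 4) ≠ 0)
  have htel := sum_range_sub (certificate a m) (2 * m + 4)
  rw [← sum_congr rfl fun k hk ↦ summand_telescoping a m k (hc k (mem_range.mp hk)),
    ← mul_sum, sum_add_distrib, sum_add_distrib, ← mul_sum, ← mul_sum, ← mul_sum,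
    certificate_zero, sub_zero] at htel
  have hboundary : certificate a m (2 * m + 4)
      = -(2 * (2 * (m : ℂ) + 3) * (2 * m + 4)) * ((a + m) * (2 * a + 2 * m - 1)) *
          summand a (m + 2) (2 * m + 4) := by
    simp only [certificate]
    push_cast
    ring
  have h₀ := sum_range_summand_of_le a (n := m) (N := 2 * m + 4) (by omega)
  have h₁ := sum_range_summand_of_le a (n := m + 1) (N := 2 * m + 4) (by omega)
  have h₂ := sum_range_succ (summand a (m + 2)) (2 * m + 4)
  rw [show 2 * m + 4 + 1 = 2 * (m + 2) + 1 by ring] at h₂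
  push_cast at h₁
  apply mul_left_cancel₀ hK
  rw [← h₀, ← h₁, hypSum]
  push_cast
  rw [h₂]
  linear_combination htel + hboundary

noncomputable def closedForm (a : ℂ) (n : ℕ) : ℂ :=
  poch (1 / 2) n / poch (a - 3 / 2) n * (1 + 4 * n / (a - 1))

theorem closedForm_recurrence (a : ℂ) (m : ℕ) (ha : a - 1 ≠ 0) (h₀ : 2 * a - 3 + 2 * m ≠ 0)
    (h₁ : 2 * a - 3 + 2 * (m + 1) ≠ 0) :
    (2 * m + 1) * (m + 1) * closedForm a m
      + -(4 * m ^ 2 + 2 * m + 4 * a * m + 5 * a + 1) * closedForm a (m + 1)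
      + (a + m) * (2 * a + 2 * m - 1) * closedForm a (m + 2) = 0 := by
  simp only [closedForm, poch_succ]
  push_cast
  rcases eq_or_ne (poch (a - 3 / 2) m) 0 with hP | hP
  · simp [hP]
  · field_simp
    ring

lemma hypSum_zero (a : ℂ) : hypSum a 0 = closedForm a 0 := by
  simp [hypSum, closedForm, summand, poch_zero]

lemma hypSum_one (a : ℂ) (ha : a - 1 ≠ 0) (hc : 2 * a - 3 ≠ 0) :
    hypSum a 1 = closedForm a 1 := by
  have hc₁ : 2 * a - 3 + 1 ≠ 0 := fun h ↦ ha (by linear_combination h / 2)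
  simp only [hypSum, closedForm, summand, sum_range_succ, range_one, sum_singleton, poch_succ,
    poch_zero, Nat.factorial, Nat.succ_eq_add_one, Nat.reduceAdd, Nat.cast_ofNat, Nat.cast_one,
    CharP.cast_eq_zero, pow_zero, pow_one, mul_one, one_mul, add_zero, zero_add, mul_neg, neg_mul,
    div_self one_ne_zero, one_div]
  field_simp
  ring

theorem eq_of_linear_recurrence_two {K : Type*} [Field K] {N : ℕ} {u v c₀ c₁ c₂ : ℕ → K}
    (h₀ : u 0 = v 0) (h₁ : 1 ≤ N → u 1 = v 1) (hc : ∀ m, m + 2 ≤ N → c₂ m ≠ 0)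
    (hu : ∀ m, m + 2 ≤ N → c₀ m * u m + c₁ m * u (m + 1) + c₂ m * u (m + 2) = 0)
    (hv : ∀ m, m + 2 ≤ N → c₀ m * v m + c₁ m * v (m + 1) + c₂ m * v (m + 2) = 0) :
    ∀ n ≤ N, u n = v n := by
  intro n
  induction n using Nat.strong_induction_on with
  | _ n ih =>
    match n with
    | 0 => exact fun _ ↦ h₀
    | 1 => exact h₁
    | m + 2 =>
      intro hm
      apply mul_left_cancel₀ (hc m hm)
      linear_combination hu m hm - hv m hm - c₀ m * ih m (by omega) (by omega)
        - c₁ m * ih (m + 1) (by omega) (by omega)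

theorem twoF1_neg2n_a_twoAm3 (n : ℕ) (a : ℂ) (h : ∀ k ≤ 2 * n, poch (2 * a - 3) k ≠ 0)
    (ha : a - 1 ≠ 0) :
    ∑ k ∈ range (2 * n + 1),
        poch (-(2 * n : ℂ)) k * poch a k * 2 ^ k / (poch (2 * a - 3) k * (k.factorial : ℂ))
      = poch (1 / 2) n / poch (a - 3 / 2) n * (1 + 4 * n / (a - 1)) := by
  have hc : ∀ k < 2 * n, 2 * a - 3 + k ≠ 0 := fun k hk ↦
    right_ne_zero_of_mul (poch_succ (2 * a - 3) k ▸ h (k + 1) hk)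
  refine eq_of_linear_recurrence_two (hypSum_zero a)
    (fun _ ↦ hypSum_one a ha (by simpa using hc 0 (by omega)))
    (fun m hm ↦ mul_ne_zero ?_ ?_)
    (fun m hm ↦ hypSum_recurrence a m fun k hk ↦ hc k (by omega))
    (fun m hm ↦ closedForm_recurrence a m ha ?_ ?_) n le_rfl
  · exact fun hz ↦ hc (2 * m + 3) (by omega) (by push_cast; linear_combination 2 * hz)
  · exact fun hz ↦ hc (2 * m + 2) (by omega) (by push_cast; linear_combination hz)
  · exact_mod_cast hc (2 * m) (by omega)
  · exact_mod_cast hc (2 * m + 2) (by omega)
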